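/- arXiv:2409.11053 — 3 statements merged into one kernel-verified Lean document; each statement's English description precedes it below -/
import Mathlib

section
/- Let ε be a real random variable with E[ε] = 0 and E[|ε|^{1+κ}] ≤ v_κ for some κ > 0 and v_κ > 0. Then |E[H_γ'(ε)]| ≤ v_κ γ^{−κ}, where H_γ' is the derivative of the Huber loss with parameter γ > 0. -/
open MeasureTheory

noncomputable def huberDeriv (γ u : ℝ) : ℝ :=
  if u > γ then γ else if u < -γ then -γ else u

lemma huberDeriv_sub_le (γ κ : ℝ) (hγ : 0 < γ) (hκ : 0 < κ) (u : ℝ) :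
    |huberDeriv γ u - u| ≤ |u| ^ (1 + κ) * γ ^ (-κ) := by
  have key : ∀ t : ℝ, γ < t → t - γ ≤ t ^ (1 + κ) * γ ^ (-κ) := by
    intro t ht
    have ht0 : 0 < t := hγ.trans ht
    have h1 : t ^ (1 + κ) = t * t ^ κ := by
      rw [Real.rpow_add ht0, Real.rpow_one]
    have h2 : γ ^ κ ≤ t ^ κ := Real.rpow_le_rpow hγ.le ht.le hκ.le
    have h3 : γ ^ (-κ) = (γ ^ κ)⁻¹ := Real.rpow_neg hγ.le κ
    have h4 : (0:ℝ) < γ ^ κ := Real.rpow_pos_of_pos hγ κ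
    have : t ≤ t * t ^ κ * (γ ^ κ)⁻¹ := by
      rw [mul_assoc]
      nth_rewrite 1 [← mul_one t]
      apply mul_le_mul_of_nonneg_left _ ht0.le
      rw [le_mul_inv_iff₀ h4, one_mul]
      exact h2
    rw [h1, h3]
    linarith
  unfold huberDeriv
  split_ifs with h1 h2
  · have h := key u h1
    rw [abs_sub_comm, abs_of_nonneg (by linarith), abs_of_pos (hγ.trans h1)]
    linarith
  · have hu : γ < -u := by linarith
    have h := key (-u) hu
    have : |(-γ) - u| = -u - γ := by
      rw [abs_of_nonneg]; ring_nf; linarith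
    rw [this]
    calc -u - γ ≤ (-u) ^ (1 + κ) * γ ^ (-κ) := h
      _ = |u| ^ (1 + κ) * γ ^ (-κ) := by rw [← abs_of_pos (hγ.trans hu), abs_neg]
  · simp only [sub_self, abs_zero]
    positivity

theorem abs_expectation_huberDeriv_le
    {Ω : Type*} [MeasurableSpace Ω] (μ : Measure Ω) [IsProbabilityMeasure μ]
    (ε : Ω → ℝ) (κ v γ : ℝ) (hκ : 0 < κ) (hv : 0 < v) (hγ : 0 < γ)
    (hmeas : Measurable ε) (hint : Integrable ε μ)
    (hmom_int : Integrable (fun ω => |ε ω| ^ (1 + κ)) μ)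
    (hmean : ∫ ω, ε ω ∂μ = 0)
    (hmom : ∫ ω, |ε ω| ^ (1 + κ) ∂μ ≤ v) :
    |∫ ω, huberDeriv γ (ε ω) ∂μ| ≤ v * γ ^ (-κ) := by
  have hγκ : (0:ℝ) < γ ^ (-κ) := Real.rpow_pos_of_pos hγ _
  set g : Ω → ℝ := fun ω => huberDeriv γ (ε ω) - ε ω with hg
  have hmeasH : Measurable fun u => huberDeriv γ u := by
    unfold huberDeriv
    apply Measurable.ite (measurableSet_lt measurable_const measurable_id)
      measurable_const
    exact Measurable.ite (measurableSet_lt measurable_id measurable_const)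
      measurable_const measurable_id
  have hgmeas : Measurable g := ((hmeasH.comp hmeas).sub hmeas)
  have hbound : ∀ ω, |g ω| ≤ |ε ω| ^ (1 + κ) * γ ^ (-κ) := fun ω =>
    huberDeriv_sub_le γ κ hγ hκ (ε ω)
  have hGint : Integrable (fun ω => |ε ω| ^ (1 + κ) * γ ^ (-κ)) μ :=
    hmom_int.mul_const _
  have hgint : Integrable g μ :=
    hGint.mono' hgmeas.aestronglyMeasurable (Filter.Eventually.of_forall hbound)
  have hHint : Integrable (fun ω => huberDeriv γ (ε ω)) μ := by
    have : (fun ω => huberDeriv γ (ε ω)) = fun ω => g ω + ε ω := by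
      funext ω; simp [hg]
    rw [this]; exact hgint.add hint
  have heq : ∫ ω, huberDeriv γ (ε ω) ∂μ = ∫ ω, g ω ∂μ := by
    have : ∫ ω, g ω ∂μ = ∫ ω, huberDeriv γ (ε ω) ∂μ - ∫ ω, ε ω ∂μ :=
      integral_sub hHint hint
    rw [this, hmean, sub_zero]
  rw [heq]
  calc |∫ ω, g ω ∂μ| ≤ ∫ ω, |g ω| ∂μ := (by
        rw [← Real.norm_eq_abs]
        exact (norm_integral_le_integral_norm _).trans (le_of_eq (by
          simp [Real.norm_eq_abs])))
    _ ≤ ∫ ω, |ε ω| ^ (1 + κ) * γ ^ (-κ) ∂μ := by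
        apply integral_mono (hgint.abs) hGint hbound
    _ = (∫ ω, |ε ω| ^ (1 + κ) ∂μ) * γ ^ (-κ) := integral_mul_const _ _
    _ ≤ v * γ ^ (-κ) := mul_le_mul_of_nonneg_right hmom hγκ.le
end

section
/- Let ε be a real random variable with E[|ε|^{1+κ}] ≤ v_κ for some κ ∈ (0,1] and v_κ > 0, and let γ > 0. Then E[(H_γ'(ε))²] ≤ 2 v_κ γ^{1−κ}, where H_γ' is the derivative of the Huber loss with parameter γ. -/
open MeasureTheory

lemma huberDeriv_sq_le (γ κ : ℝ) (hγ : 0 < γ) (hκ0 : 0 < κ) (hκ1 : κ ≤ 1) (u : ℝ) :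
    (huberDeriv γ u) ^ 2 ≤ γ ^ (1 - κ) * |u| ^ (1 + κ) := by
  have h2 : γ ^ (1 - κ) * γ ^ (1 + κ) = γ ^ 2 := by
    rw [← Real.rpow_add hγ]
    norm_num
  unfold huberDeriv
  split_ifs with h1 h3
  · have hle : γ ≤ |u| := le_trans h1.le (le_abs_self u)
    calc γ ^ 2 = γ ^ (1 - κ) * γ ^ (1 + κ) := h2.symm
      _ ≤ γ ^ (1 - κ) * |u| ^ (1 + κ) :=
          mul_le_mul_of_nonneg_left (Real.rpow_le_rpow hγ.le hle (by positivity))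
            (Real.rpow_nonneg hγ.le _)
  · have hle : γ ≤ |u| := le_trans (by linarith : γ ≤ -u) (neg_le_abs u)
    calc (-γ) ^ 2 = γ ^ (1 - κ) * γ ^ (1 + κ) := by rw [h2]; ring
      _ ≤ γ ^ (1 - κ) * |u| ^ (1 + κ) :=
          mul_le_mul_of_nonneg_left (Real.rpow_le_rpow hγ.le hle (by positivity))
            (Real.rpow_nonneg hγ.le _)
  · have hle : |u| ≤ γ := abs_le.mpr ⟨by linarith, by linarith⟩
    have habs : (0:ℝ) ≤ |u| := abs_nonneg u
    calc u ^ 2 = |u| ^ (2:ℝ) := by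
          rw [Real.rpow_two, sq_abs]
      _ = |u| ^ (1 - κ) * |u| ^ (1 + κ) := by
          rw [← Real.rpow_add' habs (by norm_num)]
          norm_num
      _ ≤ γ ^ (1 - κ) * |u| ^ (1 + κ) :=
          mul_le_mul_of_nonneg_right (Real.rpow_le_rpow habs hle (by linarith))
            (Real.rpow_nonneg habs _)

theorem expectation_sq_huberDeriv_le
    {Ω : Type*} [MeasurableSpace Ω] (μ : Measure Ω) [IsProbabilityMeasure μ]
    (ε : Ω → ℝ) (κ v γ : ℝ) (hκ : κ ∈ Set.Ioc (0 : ℝ) 1) (hv : 0 < v) (hγ : 0 < γ)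
    (hmeas : Measurable ε)
    (hmom_int : Integrable (fun ω => |ε ω| ^ (1 + κ)) μ)
    (hmom : ∫ ω, |ε ω| ^ (1 + κ) ∂μ ≤ v) :
    ∫ ω, (huberDeriv γ (ε ω)) ^ 2 ∂μ ≤ 2 * v * γ ^ (1 - κ) := by
  obtain ⟨hκ0, hκ1⟩ := hκ
  have hmeasH : Measurable fun ω => (huberDeriv γ (ε ω)) ^ 2 := by
    unfold huberDeriv
    exact ((Measurable.ite (measurableSet_lt measurable_const hmeas) measurable_const
      (Measurable.ite (measurableSet_lt hmeas measurable_const) measurable_const hmeas)).pow_const 2)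
  have hintH : Integrable (fun ω => (huberDeriv γ (ε ω)) ^ 2) μ := by
    refine ⟨hmeasH.aestronglyMeasurable, ?_⟩
    refine HasFiniteIntegral.mono' (integrable_const (γ ^ 2)).2 ?_
    filter_upwards with ω
    rw [Real.norm_eq_abs, abs_sq]
    unfold huberDeriv
    split_ifs with h1 h3
    · exact le_rfl
    · rw [neg_sq]
    · have : |ε ω| ≤ γ := abs_le.mpr ⟨by linarith, by linarith⟩
      calc ε ω ^ 2 = |ε ω| ^ 2 := (sq_abs _).symm
        _ ≤ γ ^ 2 := by gcongr
  have hstep : ∫ ω, (huberDeriv γ (ε ω)) ^ 2 ∂μ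
      ≤ ∫ ω, γ ^ (1 - κ) * |ε ω| ^ (1 + κ) ∂μ := by
    refine integral_mono hintH (hmom_int.const_mul _) ?_
    intro ω
    exact huberDeriv_sq_le γ κ hγ hκ0 hκ1 (ε ω)
  have : ∫ ω, γ ^ (1 - κ) * |ε ω| ^ (1 + κ) ∂μ = γ ^ (1 - κ) * ∫ ω, |ε ω| ^ (1 + κ) ∂μ :=
    integral_const_mul _ _
  rw [this] at hstep
  have hγp : (0:ℝ) ≤ γ ^ (1 - κ) := Real.rpow_nonneg hγ.le _
  calc ∫ ω, (huberDeriv γ (ε ω)) ^ 2 ∂μ ≤ γ ^ (1 - κ) * ∫ ω, |ε ω| ^ (1 + κ) ∂μ := hstep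
    _ ≤ γ ^ (1 - κ) * v := by gcongr
    _ ≤ 2 * v * γ ^ (1 - κ) := by nlinarith
end

section
/- Let X be a centered random element of a separable Hilbert space with covariance operator Γ = E[X⊗X] having eigenvalues s_j, and suppose E[ξ_j⁴] ≤ C s_j² for all j where ξ_j = ⟨X, e_j⟩. Then for λ > 0, E‖(Γ+λI)^{−1/2}(X ⊗ X)‖_{HS}² ≤ C·tr(Γ)·N(λ), where N(λ) = Σ_k s_k/(s_k+λ). -/
open MeasureTheory RealInnerProductSpace

private lemma amgm_div (t u v : ℝ) (ht : 0 < t) : u * v ≤ (t * u ^ 2 + v ^ 2 / t) / 2 := by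
  have h : t * u ^ 2 + v ^ 2 / t - 2 * (u * v) = (t * u - v) ^ 2 / t := by
    field_simp; ring
  nlinarith [div_nonneg (sq_nonneg (t * u - v)) ht.le]

/-- Let `X` be a centered random element with covariance `Γ` having eigenpairs `(s_j, e_j)`,
coefficients `ξ_j = ⟪X, e_j⟫` satisfying `E[ξ_j⁴] ≤ C s_j²`. Then the expected squared
Hilbert–Schmidt norm `E‖(Γ+λI)^{-1/2}(X⊗X)‖_{HS}² = E[Σ_{j,k} ξ_j²ξ_k²/(s_k+λ)]` is bounded
by `C·tr(Γ)·N(λ)` where `tr(Γ) = Σ_j s_j` and `N(λ) = Σ_k s_k/(s_k+λ)`. -/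
theorem expected_hs_norm_sq_bound
    {Ω : Type*} [MeasurableSpace Ω] (μ : Measure Ω) [IsProbabilityMeasure μ]
    (ξ : ℕ → Ω → ℝ) (hmeas : ∀ j, Measurable (ξ j))
    (s : ℕ → ℝ) (hs : ∀ j, 0 ≤ s j) (hsum : Summable s)
    (C : ℝ) (hC : 0 < C)
    (h4 : ∀ j, Integrable (fun ω => (ξ j ω) ^ 4) μ ∧ ∫ ω, (ξ j ω) ^ 4 ∂μ ≤ C * (s j) ^ 2)
    (lam : ℝ) (hlam : 0 < lam) :
    ∫ ω, (∑' p : ℕ × ℕ, (ξ p.1 ω) ^ 2 * (ξ p.2 ω) ^ 2 / (s p.2 + lam)) ∂μ ≤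
      C * (∑' j, s j) * (∑' k, s k / (s k + lam)) := by
  -- notation
  set a : ℕ → ℝ := fun j => C * s j with ha_def
  set b : ℕ → ℝ := fun k => s k / (s k + lam) with hb_def
  have hpos : ∀ k, 0 < s k + lam := fun k => by linarith [hs k]
  -- integrability of products ξ_j² ξ_k²
  have hint : ∀ j k, Integrable (fun ω => ξ j ω ^ 2 * ξ k ω ^ 2) μ := by
    intro j k
    refine Integrable.mono (((h4 j).1.add (h4 k).1).div_const 2)
      ((((hmeas j).pow_const 2).mul ((hmeas k).pow_const 2)).aestronglyMeasurable) ?_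
    filter_upwards with ω
    simp only [Pi.add_apply]
    rw [Real.norm_eq_abs, Real.norm_eq_abs]
    have h1 : (0:ℝ) ≤ ξ j ω ^ 2 * ξ k ω ^ 2 := by positivity
    rw [abs_of_nonneg h1, abs_of_nonneg (by positivity)]
    nlinarith [sq_nonneg (ξ j ω ^ 2 - ξ k ω ^ 2)]
  -- Cauchy–Schwarz style bound: ∫ ξ_j² ξ_k² ≤ C s_j s_k
  have hCS : ∀ j k, ∫ ω, ξ j ω ^ 2 * ξ k ω ^ 2 ∂μ ≤ C * (s j * s k) := by
    intro j k
    refine le_of_forall_pos_le_add ?_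
    intro ε hε
    set D : ℝ := C * (s j + s k) / 2 with hD
    have hD0 : 0 ≤ D :=
      div_nonneg (mul_nonneg hC.le (by linarith [hs j, hs k])) (by norm_num)
    set δ : ℝ := ε / (D + 1) with hδ
    have hδ0 : 0 < δ := by positivity
    have hδD : δ * D ≤ ε := by
      rw [hδ, div_mul_eq_mul_div, div_le_iff₀ (by linarith)]
      nlinarith
    set t : ℝ := (s k + δ) / (s j + δ) with ht_def
    have hjδ : 0 < s j + δ := by linarith [hs j]
    have hkδ : 0 < s k + δ := by linarith [hs k]
    have ht : 0 < t := div_pos hkδ hjδ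
    have step1 : ∫ ω, ξ j ω ^ 2 * ξ k ω ^ 2 ∂μ ≤
        ∫ ω, (t * ξ j ω ^ 4 + ξ k ω ^ 4 / t) / 2 ∂μ := by
      refine integral_mono (hint j k) ((((h4 j).1.const_mul t).add ((h4 k).1.div_const t)).div_const 2) ?_
      intro ω
      show ξ j ω ^ 2 * ξ k ω ^ 2 ≤ (t * ξ j ω ^ 4 + ξ k ω ^ 4 / t) / 2
      have h := amgm_div t (ξ j ω ^ 2) (ξ k ω ^ 2) ht
      rw [show (ξ j ω ^ 2) ^ 2 = ξ j ω ^ 4 by ring,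
        show (ξ k ω ^ 2) ^ 2 = ξ k ω ^ 4 by ring] at h
      exact h
    have step2 : ∫ ω, (t * ξ j ω ^ 4 + ξ k ω ^ 4 / t) / 2 ∂μ =
        (t * ∫ ω, ξ j ω ^ 4 ∂μ + (∫ ω, ξ k ω ^ 4 ∂μ) / t) / 2 := by
      rw [integral_div, integral_add ((h4 j).1.const_mul t) ((h4 k).1.div_const t),
        integral_const_mul, integral_div]
    have step3 : (t * ∫ ω, ξ j ω ^ 4 ∂μ + (∫ ω, ξ k ω ^ 4 ∂μ) / t) / 2 ≤
        (t * (C * s j ^ 2) + (C * s k ^ 2) / t) / 2 := by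
      have b1 := (h4 j).2
      have b2 := (h4 k).2
      have b3 : (∫ ω, ξ k ω ^ 4 ∂μ) / t ≤ (C * s k ^ 2) / t :=
        (div_le_div_iff_of_pos_right ht).mpr b2
      nlinarith [ht.le]
    have step4 : (t * (C * s j ^ 2) + (C * s k ^ 2) / t) / 2 ≤ C * (s j * s k) + ε := by
      have h1 : t * s j ^ 2 ≤ s j * (s k + δ) := by
        rw [ht_def, div_mul_eq_mul_div, div_le_iff₀ hjδ]
        nlinarith [mul_nonneg (mul_nonneg hkδ.le (hs j)) hδ0.le]
      have h2 : s k ^ 2 / t ≤ s k * (s j + δ) := by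
        rw [ht_def, div_div_eq_mul_div, div_le_iff₀ hkδ]
        nlinarith [mul_nonneg (mul_nonneg hjδ.le (hs k)) hδ0.le]
      have h3 : t * (C * s j ^ 2) = C * (t * s j ^ 2) := by ring
      have h4' : (C * s k ^ 2) / t = C * (s k ^ 2 / t) := by ring
      rw [h3, h4']
      have : C * (t * s j ^ 2) + C * (s k ^ 2 / t) ≤
          C * (s j * (s k + δ)) + C * (s k * (s j + δ)) := by
        have := mul_le_mul_of_nonneg_left h1 hC.le
        have := mul_le_mul_of_nonneg_left h2 hC.le
        linarith
      calc (C * (t * s j ^ 2) + C * (s k ^ 2 / t)) / 2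
          ≤ (C * (s j * (s k + δ)) + C * (s k * (s j + δ))) / 2 := by linarith
        _ = C * (s j * s k) + δ * D := by rw [hD]; ring
        _ ≤ C * (s j * s k) + ε := by linarith
    linarith [step1, step2 ▸ step1, step3, step4]
  -- integrability and bound for each term of the double series
  have hfint : ∀ p : ℕ × ℕ, Integrable (fun ω => ξ p.1 ω ^ 2 * ξ p.2 ω ^ 2 / (s p.2 + lam)) μ :=
    fun p => (hint p.1 p.2).div_const _
  have hfbound : ∀ p : ℕ × ℕ,
      ∫ ω, ξ p.1 ω ^ 2 * ξ p.2 ω ^ 2 / (s p.2 + lam) ∂μ ≤ a p.1 * b p.2 := by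
    intro p
    rw [integral_div]
    have : a p.1 * b p.2 = C * (s p.1 * s p.2) / (s p.2 + lam) := by
      rw [ha_def, hb_def]; field_simp
    rw [this]
    exact (div_le_div_iff_of_pos_right (hpos p.2)).mpr (hCS p.1 p.2)
  have hfnonneg : ∀ p : ℕ × ℕ, 0 ≤ ∫ ω, ξ p.1 ω ^ 2 * ξ p.2 ω ^ 2 / (s p.2 + lam) ∂μ := by
    intro p
    refine integral_nonneg fun ω => ?_
    have := hpos p.2
    positivity
  -- summability of the bounding double series
  have ha_nonneg : ∀ j, 0 ≤ a j := fun j => by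
    have := hs j; rw [ha_def]; positivity
  have hb_nonneg : ∀ k, 0 ≤ b k := fun k => div_nonneg (hs k) (hpos k).le
  have ha_sum : Summable a := hsum.mul_left C
  have hb_sum : Summable b := by
    refine Summable.of_nonneg_of_le hb_nonneg (fun k => ?_) (hsum.div_const lam)
    rw [hb_def]
    exact div_le_div_of_nonneg_left (hs k) hlam (by linarith [hs k])
  have hab : Summable (fun p : ℕ × ℕ => a p.1 * b p.2) :=
    ha_sum.mul_of_nonneg hb_sum ha_nonneg hb_nonneg
  -- summability of integral norms
  have hnorm_eq : ∀ p : ℕ × ℕ,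
      ∫ ω, ‖ξ p.1 ω ^ 2 * ξ p.2 ω ^ 2 / (s p.2 + lam)‖ ∂μ =
      ∫ ω, ξ p.1 ω ^ 2 * ξ p.2 ω ^ 2 / (s p.2 + lam) ∂μ := by
    intro p
    refine integral_congr_ae ?_
    filter_upwards with ω
    rw [Real.norm_eq_abs, abs_of_nonneg]
    have := hpos p.2
    positivity
  have hnorm_sum : Summable fun p : ℕ × ℕ =>
      ∫ ω, ‖ξ p.1 ω ^ 2 * ξ p.2 ω ^ 2 / (s p.2 + lam)‖ ∂μ := by
    refine Summable.of_nonneg_of_le (fun p => integral_nonneg fun ω => norm_nonneg _)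
      (fun p => ?_) hab
    rw [hnorm_eq p]
    exact hfbound p
  -- put everything together
  rw [← integral_tsum_of_summable_integral_norm hfint hnorm_sum]
  calc (∑' p : ℕ × ℕ, ∫ ω, ξ p.1 ω ^ 2 * ξ p.2 ω ^ 2 / (s p.2 + lam) ∂μ)
      ≤ ∑' p : ℕ × ℕ, a p.1 * b p.2 := by
        refine Summable.tsum_le_tsum hfbound ?_ hab
        refine Summable.of_nonneg_of_le hfnonneg hfbound hab
    _ = (∑' j, a j) * (∑' k, b k) := (Summable.tsum_mul_tsum ha_sum hb_sum hab).symm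
    _ = C * (∑' j, s j) * (∑' k, s k / (s k + lam)) := by
        rw [ha_def, tsum_mul_left]
end
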